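/- arXiv:2012.06189 — 3 statements merged into one kernel-verified Lean document; each statement's English description precedes it below -/
import Mathlib

section
/- For all δ ∈ (0,1/2) and ρ ∈ (0,1), setting a = δ(1-ρ)/(1-δρ), one has the strict inequality (1 - ρδ)·I(a) > I(δ), where I is the information function I(x) = log 2 + x·log x + (1-x)·log(1-x). -/
open Real

noncomputable def infoFun (x : ℝ) : ℝ := Real.log 2 + x * Real.log x + (1 - x) * Real.log (1 - x)

/-- For `δ ∈ (0,1/2)`, `ρ ∈ (0,1)` and `a = δ(1-ρ)/(1-δρ)`, one has the strict inequality
`(1 - ρδ)·I(a) > I(δ)`. -/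
theorem stmt_3 (δ ρ : ℝ) (hδ0 : 0 < δ) (hδ : δ < 1 / 2) (hρ0 : 0 < ρ) (hρ1 : ρ < 1) :
    infoFun δ < (1 - ρ * δ) * infoFun (δ * (1 - ρ) / (1 - δ * ρ)) := by
  set a := δ * (1 - ρ) / (1 - δ * ρ) with ha
  have hb : (0:ℝ) < 1 - δ * ρ := by nlinarith
  have ha0 : 0 < a := div_pos (by nlinarith) hb
  have hkey : (1 - δ * ρ) * a = δ * (1 - ρ) := by
    rw [ha]; field_simp
  have haδ : a < δ := by
    rw [ha, div_lt_iff₀ hb]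
    nlinarith [mul_pos hδ0 (mul_pos hρ0 (show (0:ℝ) < 1 - δ by linarith))]
  have ha2 : a < 1/2 := haδ.trans hδ
  have hInfo : ∀ x : ℝ, infoFun x = Real.log 2 - Real.binEntropy x := by
    intro x
    simp [infoFun, Real.binEntropy, Real.log_inv]
    ring
  have hane : a ≠ 2⁻¹ := by
    intro h; rw [h] at ha2; norm_num at ha2
  have hpos : 0 < infoFun a := by
    rw [hInfo]
    have := Real.binEntropy_lt_log_two.2 hane
    linarith
  set lam := (1/2 - δ) / (1/2 - a) with hlam
  have hc : 0 < 1/2 - a := by linarith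
  have hlam0 : 0 ≤ lam := div_nonneg (by linarith) hc.le
  have hlam1 : lam ≤ 1 := by rw [hlam, div_le_one hc]; linarith
  have hml : lam * (1/2 - a) = 1/2 - δ := div_mul_cancel₀ _ hc.ne'
  have hcomb : lam * a + (1 - lam) * (1/2) = δ := by nlinarith [hml]
  have h1lam : (0:ℝ) ≤ 1 - lam := by linarith
  have hsum : lam + (1 - lam) = 1 := by ring
  have hconc := Real.strictConcave_binEntropy.concaveOn.2
    (Set.mem_Icc.2 ⟨ha0.le, by linarith⟩)
    (show (1/2:ℝ) ∈ Set.Icc (0:ℝ) 1 by constructor <;> norm_num) hlam0 h1lam hsum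
  rw [smul_eq_mul, smul_eq_mul, smul_eq_mul, smul_eq_mul, hcomb] at hconc
  have hhalf : Real.binEntropy (1/2 : ℝ) = Real.log 2 := by
    rw [show (1/2:ℝ) = 2⁻¹ by norm_num, Real.binEntropy_two_inv]
  rw [hhalf] at hconc
  -- infoFun δ ≤ lam * infoFun a
  have hstep : infoFun δ ≤ lam * infoFun a := by
    rw [hInfo, hInfo]; nlinarith [hconc]
  have hlamlt : lam < 1 - ρ * δ := by
    rw [hlam, div_lt_iff₀ hc]
    nlinarith [hkey]
  calc infoFun δ ≤ lam * infoFun a := hstep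
    _ < (1 - ρ * δ) * infoFun a := by exact mul_lt_mul_of_pos_right hlamlt hpos
end

section
/- Let d(n) ≤ n with d(n)/n → δ as n → ∞ for δ ∈ (0, 1/2). Set C(n,d) = 2·∑_{r=0}^{d-1} binom(n-1, r). Then C(n+1, d(n)+1) / binom(n, d(n)) converges to 2(1-δ)/(1-2δ) as n → ∞. -/
/-!
Writing `r n d j = (d - j) / (n - d + j + 1)` for the ratio `binom(n, d-j-1) / binom(n, d-j)`,
the sum `∑_{l ≤ d} binom(n, l) / binom(n, d)` is `∑_k ∏_{j<k} r n d j`. Each factor tends to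
`ρ = δ / (1 - δ) < 1` and is at most `r n d 0`, so the `k`-th term tends to `ρ ^ k` and is
eventually dominated by `q ^ k` for any fixed `q ∈ (ρ, 1)`. Dominated convergence gives the limit
`1 / (1 - ρ) = (1 - δ) / (1 - 2δ)`.
-/

open Filter Finset Topology

/-- `binom(n, d - j - 1) / binom(n, d - j)` for `j < d ≤ n`; it vanishes at `j = d`, so the
products `∏_{j<k}` vanish for `k > d`. -/
noncomputable def chooseStepRatio (n d j : ℕ) : ℝ := ((d - j : ℕ) : ℝ) / ((n - d + j + 1 : ℕ) : ℝ)

theorem chooseStepRatio_nonneg (n d j : ℕ) : 0 ≤ chooseStepRatio n d j := by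
  unfold chooseStepRatio; positivity

theorem chooseStepRatio_le_chooseStepRatio_zero (n d j : ℕ) :
    chooseStepRatio n d j ≤ chooseStepRatio n d 0 := by
  unfold chooseStepRatio
  gcongr <;> omega

theorem chooseStepRatio_self (n d : ℕ) : chooseStepRatio n d d = 0 := by
  simp [chooseStepRatio]

theorem choose_sub_succ_eq_mul {n d j : ℕ} (hj : j < d) (hd : d ≤ n) :
    (n.choose (d - (j + 1)) : ℝ) = n.choose (d - j) * chooseStepRatio n d j := by
  have h := Nat.choose_succ_right_eq n (d - (j + 1))
  rw [show d - (j + 1) + 1 = d - j by omega, show n - (d - (j + 1)) = n - d + j + 1 by omega] at h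
  rw [chooseStepRatio, mul_div_assoc', eq_div_iff (by positivity)]
  exact_mod_cast h.symm

theorem choose_sub_eq_mul_prod {n d k : ℕ} (hk : k ≤ d) (hd : d ≤ n) :
    (n.choose (d - k) : ℝ) = n.choose d * ∏ j ∈ range k, chooseStepRatio n d j := by
  induction k with
  | zero => simp
  | succ k ih =>
    rw [choose_sub_succ_eq_mul (by omega) hd, ih (by omega), prod_range_succ, mul_assoc]

theorem sum_range_choose_eq_mul_tsum {n d : ℕ} (hd : d ≤ n) :
    ∑ l ∈ range (d + 1), (n.choose l : ℝ) =
      n.choose d * ∑' k, ∏ j ∈ range k, chooseStepRatio n d j := by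
  have hvanish : ∀ k ∉ range (d + 1), ∏ j ∈ range k, chooseStepRatio n d j = 0 := fun k hk =>
    prod_eq_zero (mem_range.2 (by simpa using hk)) (chooseStepRatio_self n d)
  rw [tsum_eq_sum hvanish, mul_sum, ← sum_range_reflect]
  refine sum_congr rfl fun k hk => ?_
  rw [← choose_sub_eq_mul_prod (by simpa [Nat.lt_succ_iff] using hk) hd, Nat.add_sub_cancel]

theorem tendsto_chooseStepRatio {d : ℕ → ℕ} {δ : ℝ} (hdn : ∀ n, d n ≤ n) (hδ0 : 0 < δ)
    (hδ1 : δ < 1) (hlim : Tendsto (fun n : ℕ => (d n : ℝ) / n) atTop (𝓝 δ)) (j : ℕ) :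
    Tendsto (fun n => chooseStepRatio n (d n) j) atTop (𝓝 (δ / (1 - δ))) := by
  have hinv := tendsto_one_div_atTop_nhds_zero_nat (𝕜 := ℝ)
  have hnum : Tendsto (fun n : ℕ => (d n : ℝ) / n - j * (1 / n)) atTop (𝓝 δ) := by
    simpa using hlim.sub (hinv.const_mul (j : ℝ))
  have hden : Tendsto (fun n : ℕ => 1 - (d n : ℝ) / n + (j + 1) * (1 / n)) atTop (𝓝 (1 - δ)) := by
    simpa using (tendsto_const_nhds.sub hlim).add (hinv.const_mul ((j : ℝ) + 1))
  have hd_top : Tendsto d atTop atTop := by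
    rw [← tendsto_natCast_atTop_iff (R := ℝ)]
    refine (hlim.pos_mul_atTop hδ0 tendsto_natCast_atTop_atTop).congr' ?_
    filter_upwards [eventually_gt_atTop 0] with n hn
    field_simp
  refine (hnum.div hden (by linarith)).congr' ?_
  filter_upwards [hd_top.eventually_ge_atTop j, eventually_gt_atTop 0] with n hjd hn
  rw [Pi.div_apply, chooseStepRatio, Nat.cast_sub hjd, Nat.cast_add_one, Nat.cast_add,
    Nat.cast_sub (hdn n)]
  field_simp
  ring

theorem tendsto_tsum_prod_range_of_tendsto {r : ℕ → ℕ → ℝ} {ρ : ℝ}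
    (hr0 : ∀ n j, 0 ≤ r n j) (hr_le : ∀ n j, r n j ≤ r n 0)
    (hr : ∀ j, Tendsto (r · j) atTop (𝓝 ρ)) (hρ : ρ < 1) :
    Tendsto (fun n => ∑' k, ∏ j ∈ range k, r n j) atTop (𝓝 (1 - ρ)⁻¹) := by
  have hρ0 : 0 ≤ ρ := ge_of_tendsto' (hr 0) fun n => hr0 n 0
  obtain ⟨q, hρq, hq1⟩ := exists_between hρ
  have hbound : ∀ᶠ n in atTop, ∀ k, ‖∏ j ∈ range k, r n j‖ ≤ q ^ k := by
    filter_upwards [(hr 0).eventually (eventually_le_nhds hρq)] with n hn k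
    rw [Real.norm_of_nonneg (prod_nonneg fun j _ => hr0 n j)]
    simpa using prod_le_prod (s := range k) (fun j _ => hr0 n j) (fun j _ => (hr_le n j).trans hn)
  rw [← tsum_geometric_of_lt_one hρ0 hρ]
  exact tendsto_tsum_of_dominated_convergence
    (summable_geometric_of_lt_one (hρ0.trans hρq.le) hq1)
    (fun k => by simpa using tendsto_finsetProd (range k) fun j _ => hr j) hbound

/-- If `d(n) ≤ n` and `d(n)/n → δ ∈ (0,1/2)`, then with `C(n,d) = 2∑_{r<d} binom(n-1,r)`,
so `C(n+1, d(n)+1) = 2∑_{l=0}^{d(n)} binom(n,l)`, one has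
`C(n+1, d(n)+1)/binom(n, d(n)) → 2(1-δ)/(1-2δ)`. -/
theorem stmt_14 (d : ℕ → ℕ) (δ : ℝ) (hdn : ∀ n, d n ≤ n)
    (hδ0 : 0 < δ) (hδ1 : δ < 1 / 2)
    (hlim : Tendsto (fun n : ℕ => (d n : ℝ) / n) atTop (nhds δ)) :
    Tendsto (fun n : ℕ =>
        (2 * ∑ l ∈ Finset.range (d n + 1), (Nat.choose n l : ℝ)) / Nat.choose n (d n))
      atTop (nhds (2 * (1 - δ) / (1 - 2 * δ))) := by
  have hρ : δ / (1 - δ) < 1 := by rw [div_lt_one (by linarith)]; linarith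
  have key := (tendsto_tsum_prod_range_of_tendsto (fun n => chooseStepRatio_nonneg n (d n))
    (fun n => chooseStepRatio_le_chooseStepRatio_zero n (d n))
    (tendsto_chooseStepRatio hdn hδ0 (by linarith) hlim) hρ).const_mul 2
  rw [show 2 * (1 - δ / (1 - δ))⁻¹ = 2 * (1 - δ) / (1 - 2 * δ) by
    field_simp [show (1 : ℝ) - δ ≠ 0 by linarith]; ring] at key
  refine key.congr fun n => ?_
  have hpos : (0 : ℝ) < n.choose (d n) := by exact_mod_cast Nat.choose_pos (hdn n)
  rw [sum_range_choose_eq_mul_tsum (hdn n), mul_div_assoc, mul_div_cancel_left₀ _ hpos.ne']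
end

section
/- Let n(d) ≥ d be such that d/n(d) → δ as d → ∞ with δ ∈ (1/2, 1]. Then (1/d)·E[(d - Bin(n(d), 1/2))·1{Bin(n(d),1/2) ≤ d}] → 1 - 1/(2δ) as d → ∞. -/
/-!
Summing `d - l` over all `l ≤ n` instead of `l ≤ d` gives exactly `(d - n/2)·2ⁿ`, since
`Bin(n, 1/2)` has mean `n/2`; the truncation adds back `∑_{l > d} (l - d)·C(n, l)`. For `d > n/2`
this correction is Chebyshev-small: `l - d ≤ (2l - n)² / (2(2d - n))` when `l > d`, and the
variance identity `∑ C(n, l)(2l - n)² = n·2ⁿ` bounds it by `n·2ⁿ / (2(2d - n))`, which is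
`o(d·2ⁿ)` because `n/d → 1/δ < 2`. Hence the normalized sum tends to `1 - 1/(2δ)`.
-/

open Filter Finset Topology

theorem sum_range_choose_mul_sq_two_mul_sub {R : Type*} [CommRing R] (n : ℕ) :
    ∑ l ∈ range (n + 1), (n.choose l : R) * (2 * l - n) ^ 2 = (n : R) * 2 ^ n := by
  induction n with
  | zero => simp
  | succ n ih =>
    have hpascal := sum_choose_succ_mul (fun l _ => (2 * l - (n + 1) : R) ^ 2) n
    push_cast at hpascal ⊢
    refine hpascal.trans ?_
    rw [← sum_add_distrib]
    calc ∑ l ∈ range (n + 1), ((n.choose l : R) * (2 * l - (n + 1)) ^ 2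
            + n.choose l * (2 * (l + 1) - (n + 1)) ^ 2)
        = 2 * ∑ l ∈ range (n + 1), (n.choose l : R) * (2 * l - n) ^ 2
            + 2 * ∑ l ∈ range (n + 1), (n.choose l : R) := by
          rw [mul_sum, mul_sum, ← sum_add_distrib]
          exact sum_congr rfl fun l _ => by ring
      _ = (n + 1) * 2 ^ (n + 1) := by
          rw [ih, ← Nat.cast_sum, Nat.sum_range_choose]
          push_cast; ring

theorem sum_range_choose_mul_two_mul_sub {R : Type*} [CommRing R] (n : ℕ) :
    ∑ l ∈ range (n + 1), (n.choose l : R) * (2 * l - n) = 0 := by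
  have hmean := congrArg (Nat.cast : ℕ → R) (Nat.sum_range_mul_choose n)
  have hcount := congrArg (Nat.cast : ℕ → R) (Nat.sum_range_choose n)
  push_cast at hmean hcount
  calc ∑ l ∈ range (n + 1), (n.choose l : R) * (2 * l - n)
      = 2 * ∑ l ∈ range (n + 1), (l * n.choose l : R)
          - n * ∑ l ∈ range (n + 1), (n.choose l : R) := by
        rw [mul_sum, mul_sum, ← sum_sub_distrib]
        exact sum_congr rfl fun l _ => by ring
    _ = 0 := by
        rw [hmean, hcount]
        rcases n with _ | n
        · simp
        · push_cast; ring

theorem sum_range_sub_mul_choose_eq_add_sum_Ico {n d : ℕ} (hd : d ≤ n) :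
    ∑ l ∈ range (d + 1), ((d : ℝ) - l) * n.choose l =
      ((d : ℝ) - n / 2) * 2 ^ n + ∑ l ∈ Ico (d + 1) (n + 1), ((l : ℝ) - d) * n.choose l := by
  have hfull :
      ∑ l ∈ range (n + 1), ((d : ℝ) - l) * n.choose l = ((d : ℝ) - n / 2) * 2 ^ n := by
    calc ∑ l ∈ range (n + 1), ((d : ℝ) - l) * n.choose l
        = (d - n / 2) * ∑ l ∈ range (n + 1), (n.choose l : ℝ)
            - 1 / 2 * ∑ l ∈ range (n + 1), (n.choose l : ℝ) * (2 * l - n) := by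
          rw [mul_sum, mul_sum, ← sum_sub_distrib]
          exact sum_congr rfl fun l _ => by ring
      _ = (d - n / 2) * 2 ^ n := by
          rw [sum_range_choose_mul_two_mul_sub, mul_zero, sub_zero]
          congr 1
          exact_mod_cast Nat.sum_range_choose n
  rw [← hfull, ← sum_range_add_sum_Ico _ (by omega : d + 1 ≤ n + 1), add_assoc,
    ← sum_add_distrib, left_eq_add]
  exact sum_eq_zero fun l _ => by ring

theorem sum_Ico_sub_mul_choose_nonneg (n d : ℕ) :
    0 ≤ ∑ l ∈ Ico (d + 1) (n + 1), ((l : ℝ) - d) * n.choose l := by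
  refine sum_nonneg fun l hl => mul_nonneg (sub_nonneg.mpr ?_) (Nat.cast_nonneg _)
  exact_mod_cast Nat.le_of_succ_le (mem_Ico.mp hl).1

theorem sum_Ico_sub_mul_choose_le {n d : ℕ} (hd : (n : ℝ) < 2 * d) :
    ∑ l ∈ Ico (d + 1) (n + 1), ((l : ℝ) - d) * n.choose l
      ≤ n * 2 ^ n / (2 * (2 * d - n)) := by
  rw [le_div_iff₀ (by linarith), sum_mul, ← sum_range_choose_mul_sq_two_mul_sub]
  calc ∑ l ∈ Ico (d + 1) (n + 1), ((l : ℝ) - d) * n.choose l * (2 * (2 * d - n))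
      ≤ ∑ l ∈ Ico (d + 1) (n + 1), (n.choose l : ℝ) * (2 * l - n) ^ 2 := by
        refine sum_le_sum fun l hl => ?_
        have hl : (d : ℝ) + 1 ≤ l := by exact_mod_cast (mem_Ico.mp hl).1
        have hterm : ((l : ℝ) - d) * (2 * (2 * d - n)) ≤ (2 * l - n) ^ 2 := by nlinarith
        rw [mul_comm _ (n.choose l : ℝ), mul_assoc]
        exact mul_le_mul_of_nonneg_left hterm (Nat.cast_nonneg _)
    _ ≤ ∑ l ∈ range (n + 1), (n.choose l : ℝ) * (2 * l - n) ^ 2 := by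
        refine sum_le_sum_of_subset_of_nonneg ?_ fun l _ _ => by positivity
        rw [range_eq_Ico]
        exact Ico_subset_Ico_left (Nat.zero_le _)

theorem tendsto_sum_Ico_sub_mul_choose_div {n : ℕ → ℕ} {r : ℝ} (hr : r < 2)
    (hratio : Tendsto (fun d : ℕ => (n d : ℝ) / d) atTop (𝓝 r)) :
    Tendsto (fun d : ℕ =>
        (∑ l ∈ Ico (d + 1) (n d + 1), ((l : ℝ) - d) * (n d).choose l) / 2 ^ n d / d)
      atTop (𝓝 0) := by
  have hbound : Tendsto (fun d : ℕ => (n d : ℝ) / d / (2 * (2 - n d / d)) * (1 / d))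
      atTop (𝓝 0) := by
    simpa using (hratio.div ((tendsto_const_nhds.sub hratio).const_mul 2)
      (mul_ne_zero two_ne_zero (sub_ne_zero.mpr hr.ne'))).mul tendsto_one_div_atTop_nhds_zero_nat
  refine squeeze_zero' (Eventually.of_forall fun d => by
    have := sum_Ico_sub_mul_choose_nonneg (n d) d; positivity) ?_ hbound
  filter_upwards [hratio.eventually (gt_mem_nhds hr), eventually_gt_atTop 0] with d hd hd0
  have hd0 : (0 : ℝ) < d := by exact_mod_cast hd0
  have hd : (n d : ℝ) < 2 * d := by rwa [div_lt_iff₀ hd0] at hd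
  have hgap : (0 : ℝ) < 2 * d - n d := by linarith
  calc (∑ l ∈ Ico (d + 1) (n d + 1), ((l : ℝ) - d) * (n d).choose l) / 2 ^ n d / d
      ≤ n d * 2 ^ n d / (2 * (2 * d - n d)) / 2 ^ n d / d := by
        gcongr; exact sum_Ico_sub_mul_choose_le hd
    _ = (n d : ℝ) / d / (2 * (2 - n d / d)) * (1 / d) := by
        field_simp

theorem stmt_19_general (n : ℕ → ℕ) (δ : ℝ) (hn : ∀ d, d ≤ n d)
    (hδ0 : 1 / 2 < δ)
    (hlim : Tendsto (fun d : ℕ => (d : ℝ) / n d) atTop (nhds δ)) :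
    Tendsto (fun d : ℕ =>
        (1 / (d : ℝ)) *
          ((∑ l ∈ Finset.range (d + 1), ((d : ℝ) - l) * Nat.choose (n d) l) / 2 ^ n d))
      atTop (nhds (1 - 1 / (2 * δ))) := by
  have hratio : Tendsto (fun d : ℕ => (n d : ℝ) / d) atTop (𝓝 δ⁻¹) := by
    simpa [inv_div] using hlim.inv₀ (by positivity)
  have hδinv : δ⁻¹ < 2 := by
    rw [inv_lt_comm₀ (by positivity) two_pos]; linarith
  have hlimit := (tendsto_const_nhds (x := (1 : ℝ)) |>.sub (hratio.div_const 2)).add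
    (tendsto_sum_Ico_sub_mul_choose_div hδinv hratio)
  rw [show 1 - δ⁻¹ / 2 + 0 = 1 - 1 / (2 * δ) by rw [add_zero]; field_simp] at hlimit
  refine hlimit.congr' ?_
  filter_upwards [eventually_gt_atTop 0] with d hd0
  rw [sum_range_sub_mul_choose_eq_add_sum_Ico (hn d)]
  have hd0 : (0 : ℝ) < d := by exact_mod_cast hd0
  field_simp

/-- If `n(d) ≥ d` and `d/n(d) → δ ∈ (1/2,1]`, then
`(1/d)·E[(d - Bin(n(d),1/2))·1{Bin(n(d),1/2) ≤ d}]
  = (1/d)·2^{-n(d)}·∑_{l=0}^{d} (d-l)·binom(n(d),l) → 1 - 1/(2δ)`. -/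
theorem stmt_19 (n : ℕ → ℕ) (δ : ℝ) (hn : ∀ d, d ≤ n d)
    (hδ0 : 1 / 2 < δ) (hδ1 : δ ≤ 1)
    (hlim : Tendsto (fun d : ℕ => (d : ℝ) / n d) atTop (nhds δ)) :
    Tendsto (fun d : ℕ =>
        (1 / (d : ℝ)) *
          ((∑ l ∈ Finset.range (d + 1), ((d : ℝ) - l) * Nat.choose (n d) l) / 2 ^ n d))
      atTop (nhds (1 - 1 / (2 * δ))) :=
  stmt_19_general n δ hn hδ0 hlim
end
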